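/- arXiv:1101.5690 — 3 statements merged into one kernel-verified Lean document; each statement's English description precedes it below -/
import Mathlib

section
/- Every automorphism of the real algebra of quaternions is inner: for any ℝ-algebra automorphism α of ℍ there exists a unit quaternion g with α(x) = g x g⁻¹ for all x. -/
/-!
If `p² = u² = -1`, then `a - p a u` intertwines `u` with `p` for every `a`; it is nonzero
for `a = 1` or for any `a = v ≠ 0` anticommuting with `u`, and it commutes with every `c` that
commutes with `a` and anticommutes with `p` and `u`. Applied to `(α i, i)` this gives
`g₁ ≠ 0` with `g₁ i = α(i) g₁`; applied to `(g₁⁻¹ α(j) g₁, j)` with `a ∈ {1, i}` it gives `g₂`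
commuting with `i`. Then `g = g₁ g₂` satisfies `g x = α(x) g` on the generators `i, j` of `ℍ`,
hence everywhere, and `g / ‖g‖` is the required unit quaternion.
-/

section AnticommutingSquareRoots

variable {R : Type*} [Ring R]

def intertwine (p u a : R) : R := a - p * a * u

theorem intertwine_mul {p u : R} (hp : p * p = -1) (hu : u * u = -1) (a : R) :
    intertwine p u a * u = p * intertwine p u a :=
  calc (a - p * a * u) * u = a * u - p * a * (u * u) := by noncomm_ring
    _ = p * a - p * p * a * u := by rw [hp, hu]; noncomm_ring
    _ = p * (a - p * a * u) := by noncomm_ring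

theorem commute_intertwine {p u a c : R} (ha : Commute c a) (hp : c * p = -(p * c))
    (hu : c * u = -(u * c)) : Commute c (intertwine p u a) := by
  have : c * (p * a * u) = p * a * u * c :=
    calc c * (p * a * u) = c * p * a * u := by noncomm_ring
      _ = -(p * (c * a) * u) := by rw [hp]; noncomm_ring
      _ = -(p * a * (c * u)) := by rw [ha.eq]; noncomm_ring
      _ = p * a * u * c := by rw [hu]; noncomm_ring
  simp only [intertwine, Commute, SemiconjBy, mul_sub, sub_mul, this, ha.eq]

theorem intertwine_one_ne_zero_or [NoZeroDivisors R] [CharZero R] (p : R) {u v : R}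
    (hu : u * u = -1) (hv : v ≠ 0) (huv : u * v = -(v * u)) :
    intertwine p u 1 ≠ 0 ∨ intertwine p u v ≠ 0 := by
  refine or_iff_not_imp_left.2 fun h => ?_
  have hpu : 1 = p * u := by
    have : 1 - p * 1 * u = 0 := not_not.1 h
    rwa [mul_one, sub_eq_zero] at this
  have hp : p = -u :=
    calc p = -(p * (u * u)) := by rw [hu]; noncomm_ring
      _ = -u := by rw [← mul_assoc, ← hpu, one_mul]
  have : intertwine p u v = 2 * v :=
    calc v - p * v * u = v + u * v * u := by rw [hp]; noncomm_ring
      _ = v - v * (u * u) := by rw [huv]; noncomm_ring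
      _ = 2 * v := by rw [hu]; noncomm_ring
  rw [this]
  exact mul_ne_zero two_ne_zero hv

theorem exists_ne_zero_mul_eq_mul_of_sq_eq_neg_one [NoZeroDivisors R] [CharZero R] {p u v : R}
    (hp : p * p = -1) (hu : u * u = -1) (hv : v ≠ 0) (huv : u * v = -(v * u)) :
    ∃ g ≠ 0, g * u = p * g ∧
      ∀ c, Commute c v → c * p = -(p * c) → c * u = -(u * c) → Commute c g := by
  rcases intertwine_one_ne_zero_or p hu hv huv with h | h
  · exact ⟨_, h, intertwine_mul hp hu 1, fun c _ hcp hcu =>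
      commute_intertwine (Commute.one_right c) hcp hcu⟩
  · exact ⟨_, h, intertwine_mul hp hu v, fun c hcv hcp hcu => commute_intertwine hcv hcp hcu⟩

theorem exists_ne_zero_mul_eq_mul_of_anticommute {D : Type*} [DivisionRing D] [CharZero D]
    {i j i' j' : D} (hi : i * i = -1) (hj : j * j = -1) (hij : i * j = -(j * i))
    (hi' : i' * i' = -1) (hj' : j' * j' = -1) (hij' : i' * j' = -(j' * i')) :
    ∃ g ≠ 0, g * i = i' * g ∧ g * j = j' * g := by
  have ne_zero_of_mul_self {x : D} (hx : x * x = -1) : x ≠ 0 := by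
    rintro rfl; simp at hx
  obtain ⟨g₁, hg₁, hg₁i, -⟩ :=
    exists_ne_zero_mul_eq_mul_of_sq_eq_neg_one hi' hi (ne_zero_of_mul_self hj) hij
  obtain ⟨q, hg₁q⟩ : ∃ q, g₁ * q = j' * g₁ := ⟨g₁⁻¹ * (j' * g₁), mul_inv_cancel_left₀ hg₁ _⟩
  have hq2 : q * q = -1 := mul_left_cancel₀ hg₁ <|
    calc g₁ * (q * q) = j' * g₁ * q := by rw [← mul_assoc, hg₁q]
      _ = g₁ * -1 := by rw [mul_assoc, hg₁q, ← mul_assoc, hj']; noncomm_ring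
  have hiq : i * q = -(q * i) := mul_left_cancel₀ hg₁ <|
    calc g₁ * (i * q) = i' * j' * g₁ := by rw [← mul_assoc, hg₁i, mul_assoc, hg₁q, mul_assoc]
      _ = -(j' * (i' * g₁)) := by rw [hij']; noncomm_ring
      _ = g₁ * -(q * i) := by rw [← hg₁i, ← mul_assoc, ← hg₁q]; noncomm_ring
  obtain ⟨g₂, hg₂, hg₂j, hg₂i⟩ :=
    exists_ne_zero_mul_eq_mul_of_sq_eq_neg_one hq2 hj (ne_zero_of_mul_self hi)
      (by rw [hij, neg_neg])
  refine ⟨g₁ * g₂, mul_ne_zero hg₁ hg₂, ?_, ?_⟩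
  · rw [mul_assoc, ← (hg₂i i (Commute.refl i) hiq hij).eq, ← mul_assoc, hg₁i, mul_assoc]
  · rw [mul_assoc, hg₂j, ← mul_assoc, hg₁q, mul_assoc]

end AnticommutingSquareRoots

theorem exists_ne_zero_mul_eq_map_mul {D : Type*} [DivisionRing D] [CharZero D] (f : D →+* D)
    {i j : D} (hi : i * i = -1) (hj : j * j = -1) (hij : i * j = -(j * i)) :
    ∃ g ≠ 0, g * i = f i * g ∧ g * j = f j * g := by
  have map_sq {x : D} (hx : x * x = -1) : f x * f x = -1 := by
    rw [← map_mul, hx, map_neg, map_one]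
  exact exists_ne_zero_mul_eq_mul_of_anticommute hi hj hij (map_sq hi) (map_sq hj)
    (by rw [← map_mul, ← map_mul, hij, map_neg])

namespace Quaternion

variable {R : Type*} [CommRing R]

theorem i_mul_i : (⟨0, 1, 0, 0⟩ : ℍ[R]) * ⟨0, 1, 0, 0⟩ = -1 := by ext <;> simp

theorem j_mul_j : (⟨0, 0, 1, 0⟩ : ℍ[R]) * ⟨0, 0, 1, 0⟩ = -1 := by ext <;> simp

theorem i_mul_j_eq_neg_j_mul_i :
    (⟨0, 1, 0, 0⟩ : ℍ[R]) * ⟨0, 0, 1, 0⟩ = -((⟨0, 0, 1, 0⟩ : ℍ[R]) * ⟨0, 1, 0, 0⟩) := by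
  ext <;> simp

theorem algHom_apply_eq_conj (f : ℍ[R] →ₐ[R] ℍ[R])
    (g : ℍ[R]ˣ) (hi : (g : ℍ[R]) * ⟨0, 1, 0, 0⟩ = f ⟨0, 1, 0, 0⟩ * g)
    (hj : (g : ℍ[R]) * ⟨0, 0, 1, 0⟩ = f ⟨0, 0, 1, 0⟩ * g) (x : ℍ[R]) :
    f x = g * x * ↑g⁻¹ := by
  let conj := MulSemiringAction.toAlgEquiv R ℍ[R] (ConjAct.toConjAct g)
  have conj_apply (y : ℍ[R]) : conj y = g * y * ↑g⁻¹ := by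
    rw [MulSemiringAction.toAlgEquiv_apply, ConjAct.units_smul_def, ConjAct.ofConjAct_toConjAct]
  have key : f = conj.toAlgHom :=
    Quaternion.hom_ext ((Units.eq_mul_inv_iff_mul_eq g).2 hi.symm |>.trans (conj_apply _).symm)
      ((Units.eq_mul_inv_iff_mul_eq g).2 hj.symm |>.trans (conj_apply _).symm)
  exact (DFunLike.congr_fun key x).trans (conj_apply x)

end Quaternion

/-- Every ℝ-algebra automorphism of the quaternions is inner, implemented by
conjugation by a unit quaternion. -/
theorem stmt_5 (α : Quaternion ℝ ≃ₐ[ℝ] Quaternion ℝ) :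
    ∃ g : Quaternion ℝ, ‖g‖ = 1 ∧ ∀ x : Quaternion ℝ, α x = g * x * g⁻¹ := by
  have : CharZero (Quaternion ℝ) :=
    charZero_of_injective_algebraMap (algebraMap ℝ (Quaternion ℝ)).injective
  obtain ⟨g, hg, hgi, hgj⟩ := exists_ne_zero_mul_eq_map_mul (α : Quaternion ℝ →+* Quaternion ℝ)
    Quaternion.i_mul_i Quaternion.j_mul_j Quaternion.i_mul_j_eq_neg_j_mul_i
  have scaled {y : Quaternion ℝ} (h : g * y = α y * g) :
      (‖g‖⁻¹ : ℝ) • g * y = α y * ((‖g‖⁻¹ : ℝ) • g) := by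
    rw [smul_mul_assoc, mul_smul_comm, h]
  let u := Units.mk0 ((‖g‖⁻¹ : ℝ) • g) (smul_ne_zero (inv_ne_zero (norm_ne_zero_iff.2 hg)) hg)
  refine ⟨u, norm_smul_inv_norm hg, fun x => ?_⟩
  rw [← Units.val_inv_eq_inv_val]
  exact Quaternion.algHom_apply_eq_conj α.toAlgHom u (scaled hgi) (scaled hgj) x
end

section
/- In a finite-dimensional formally real Jordan algebra, the bilinear form ⟨a,b⟩ = tr(L_{a∘b}), where L_c denotes Jordan multiplication by c, is a positive definite inner product. -/
/-!
Power associativity, a consequence of the linearised Jordan identity, gives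
`(q(L_b) b) ∘ (r(L_b) b) = (X q r)(L_b) b` for real polynomials `q, r`. Take a nonzero `q` with
`q(L_b) b = 0` (the characteristic polynomial of `L_b`) and induct on its degree. Since no sum
of squares vanishes, a pair of non-real roots or a repeated real root of `q` yields such a
polynomial of smaller degree. Otherwise a simple real root `c` splits `b = u + w` with
`u ∘ w = 0`, `u ∘ u = c u` and `w` annihilated by the cofactor, so that
`tr L_{b²} = tr L_{u²} + tr L_{w²}`. Finally `u / c` is idempotent, and the multiplication
operator `L` of a nonzero idempotent satisfies the Peirce relation `2L³ - 3L² + L = 0` and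
has `1` as an eigenvalue, so its trace is positive.
-/

open Polynomial Module.End

theorem Module.End.pow_succ_apply {R M : Type*} [Semiring R] [AddCommMonoid M] [Module R M]
    (f : Module.End R M) (n : ℕ) (v : M) : (f ^ (n + 1)) v = f ((f ^ n) v) := by
  rw [pow_succ']; rfl

theorem Polynomial.aeval_mul_apply_eq_zero {R M : Type*} [CommRing R] [AddCommGroup M]
    [Module R M] {f : Module.End R M} {v : M} {p : R[X]} (hp : aeval f p v = 0) (r : R[X]) :
    aeval f (p * r) v = 0 := by
  rw [mul_comm, map_mul, Module.End.mul_apply, hp, map_zero]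

theorem Polynomial.exists_isRoot_or_sq_add_sq_dvd {q : ℝ[X]} (hq : 0 < q.natDegree) :
    (∃ x, q.IsRoot x) ∨ ∃ α β : ℝ, β ≠ 0 ∧ (X - C α) ^ 2 + C (β ^ 2) ∣ q := by
  obtain ⟨z, hz⟩ :=
    IsAlgClosed.exists_aeval_eq_zero ℂ q (natDegree_pos_iff_degree_pos.mp hq).ne'
  by_cases hz0 : z.im = 0
  · left
    refine ⟨z.re, ?_⟩
    rw [← Complex.re_add_im z, hz0, Complex.ofReal_zero, zero_mul, add_zero] at hz
    exact (FaithfulSMul.algebraMap_eq_zero_iff ℝ ℂ).mp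
      ((aeval_algebraMap_apply_eq_algebraMap_eval z.re q).symm.trans hz)
  · right
    refine ⟨z.re, z.im, hz0, ?_⟩
    convert q.quadratic_dvd_of_aeval_eq_zero_im_ne_zero hz hz0 using 1
    rw [Complex.sq_norm, Complex.normSq_apply]
    simp only [map_add, map_mul, map_pow, map_ofNat]
    ring

theorem LinearMap.trace_pos_of_peirce {V : Type*} [AddCommGroup V] [Module ℝ V]
    [FiniteDimensional ℝ V] {P : Module.End ℝ V}
    (hP : aeval P (X * (X - 1) * (2 * X - 1) : ℝ[X]) = 0) {e : V} (he : P e = e) (he0 : e ≠ 0) :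
    0 < trace ℝ V P := by
  -- `Q` and `R` are the spectral projections of `P` for the eigenvalues `1` and `1 / 2`.
  set Q := aeval P (X * (2 * X - 1) : ℝ[X])
  set R := aeval P (4 * X * (1 - X) : ℝ[X])
  have idem {p : ℝ[X]} (k : ℝ[X]) (hk : p * p - p = X * (X - 1) * (2 * X - 1) * k) :
      IsIdempotentElem (aeval P p) := by
    rw [IsIdempotentElem, ← map_mul, ← sub_eq_zero, ← map_sub, hk, map_mul, hP, zero_mul]
  have hQ : IsIdempotentElem Q := idem (2 * X + 1) (by ring)
  have hR : IsIdempotentElem R := idem (4 * (2 * X - 1)) (by ring)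
  have hsum : (2 : ℝ) • P = (2 : ℝ) • Q + R := by
    have h : (2 : ℝ) • (X : ℝ[X]) = (2 : ℝ) • (X * (2 * X - 1)) + 4 * X * (1 - X) := by
      rw [smul_eq_C_mul, smul_eq_C_mul, map_ofNat]; ring
    simpa only [map_add, map_smul, aeval_X] using congrArg (aeval P) h
  have hQe : Q e = e := by
    simp only [Q, map_mul, map_sub, map_ofNat, aeval_X, Module.End.mul_apply, map_one,
      LinearMap.sub_apply, Module.End.ofNat_apply, Module.End.one_apply, he, map_nsmul]
    module
  have hrank : 1 ≤ Module.finrank ℝ (range Q) :=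
    Submodule.one_le_finrank_iff.mpr fun h ↦ he0 <| by
      rw [← hQe, ← Submodule.mem_bot ℝ, ← h]; exact mem_range_self Q e
  have htr := congrArg (trace ℝ V) hsum
  rw [map_add, map_smul, map_smul, smul_eq_mul, smul_eq_mul,
    (IsIdempotentElem.isProj_range _ hQ).trace, (IsIdempotentElem.isProj_range _ hR).trace] at htr
  have hR0 : (0 : ℝ) ≤ Module.finrank ℝ (range R) := Nat.cast_nonneg _
  linarith [(Nat.one_le_cast (α := ℝ)).mpr hrank]

section

variable {A : Type*} [AddCommGroup A] [Module ℝ A]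

structure IsJordanProduct (mul : A →ₗ[ℝ] A →ₗ[ℝ] A) : Prop where
  comm : ∀ a b, mul a b = mul b a
  jordan : ∀ a b, mul (mul (mul a a) b) a = mul (mul a a) (mul b a)

namespace IsJordanProduct

variable {mul : A →ₗ[ℝ] A →ₗ[ℝ] A}

theorem jordan_linearized (hJ : IsJordanProduct mul) (a b c : A) :
    mul (mul (mul a a) b) c + (2 : ℝ) • mul (mul (mul a c) b) a
      = (2 : ℝ) • mul (mul a c) (mul b a) + mul (mul a a) (mul b c) := by
  have h₁ := hJ.jordan (a + c) b
  have h₂ := hJ.jordan (a - c) b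
  have h₃ := hJ.jordan c b
  simp only [map_add, map_sub, LinearMap.add_apply, LinearMap.sub_apply, hJ.comm c a] at h₁ h₂
  linear_combination (norm := module) (2⁻¹ : ℝ) • h₁ - (2⁻¹ : ℝ) • h₂ - h₃

theorem sq_mul_pow_apply (hJ : IsJordanProduct mul) (a : A) (j : ℕ) :
    mul (mul a a) ((mul a ^ j) a) = (mul a ^ (j + 2)) a := by
  induction j with
  | zero => rw [pow_zero, Module.End.one_apply, hJ.comm, zero_add, pow_succ_apply, pow_one]
  | succ j ih =>
    rw [pow_succ_apply, hJ.comm a ((mul a ^ j) a), ← hJ.jordan, ih, hJ.comm, ← pow_succ_apply]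

/-- `(mul a ^ n) a` is the power `a ^ (n + 1)`. -/
theorem pow_apply_mul_pow_apply (hJ : IsJordanProduct mul) (a : A) :
    ∀ i j : ℕ, mul ((mul a ^ i) a) ((mul a ^ j) a) = (mul a ^ (i + j + 1)) a
  | 0, j => by rw [pow_zero, Module.End.one_apply, ← pow_succ_apply, zero_add]
  | 1, j => by rw [pow_one, hJ.sq_mul_pow_apply, add_comm 1 j]
  | i + 2, 0 => by rw [hJ.comm, pow_zero, Module.End.one_apply, ← pow_succ_apply]
  | i + 2, j + 1 => by
    have h := hJ.jordan_linearized a ((mul a ^ j) a) ((mul a ^ (i + 1)) a)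
    rw [← pow_succ_apply, hJ.sq_mul_pow_apply, hJ.comm _ ((mul a ^ (i + 1)) a),
      pow_apply_mul_pow_apply hJ a (i + 1) (j + 2), pow_apply_mul_pow_apply hJ a (i + 2) j,
      hJ.comm _ a, ← pow_succ_apply, hJ.comm ((mul a ^ j) a), ← pow_succ_apply,
      hJ.comm ((mul a ^ j) a), pow_apply_mul_pow_apply hJ a (i + 1) j, hJ.sq_mul_pow_apply] at h
    have h2 : (2 : ℝ) • mul ((mul a ^ (i + 2)) a) ((mul a ^ (j + 1)) a)
        = (2 : ℝ) • (mul a ^ (i + 2 + (j + 1) + 1)) a := by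
      ring_nf at h ⊢
      linear_combination (norm := module) -h
    exact smul_right_injective A two_ne_zero h2

/-- `aeval (mul b) q b` is the element `b q(b)`: polynomials in `b` are encoded this way since
`A` need not have a unit. -/
theorem mul_aeval_apply (hJ : IsJordanProduct mul) (b : A) (q r : ℝ[X]) :
    mul (aeval (mul b) q b) (aeval (mul b) r b) = aeval (mul b) (X * q * r) b := by
  have monomial_apply (i : ℕ) (c : ℝ) :
      aeval (mul b) (monomial i c) b = c • (mul b ^ i) b := by
    rw [aeval_monomial, Module.End.mul_apply, Module.algebraMap_end_apply]
  induction q using Polynomial.induction_on' with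
  | add q₁ q₂ h₁ h₂ =>
    simp only [mul_add, add_mul, map_add, LinearMap.add_apply, h₁, h₂]
  | monomial i c =>
    induction r using Polynomial.induction_on' with
    | add r₁ r₂ h₁ h₂ => simp only [mul_add, map_add, LinearMap.add_apply, h₁, h₂]
    | monomial j d =>
      rw [← monomial_one_one_eq_X, monomial_mul_monomial, monomial_mul_monomial, one_mul,
        monomial_apply, monomial_apply, monomial_apply, map_smul, map_smul, LinearMap.smul_apply,
        hJ.pow_apply_mul_pow_apply, smul_smul, mul_comm d c, add_comm 1 i, add_right_comm]

theorem aeval_mul_aeval_apply (hJ : IsJordanProduct mul) {b : A} {f : ℝ[X]}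
    (hf : aeval (mul b) (f * f - f) b = 0) (q : ℝ[X]) :
    aeval (mul (aeval (mul b) f b)) q (aeval (mul b) f b) = aeval (mul b) (f * q) b := by
  induction q using Polynomial.induction_on with
  | C c => rw [aeval_C, Module.algebraMap_end_apply, mul_comm, ← smul_eq_C_mul, map_smul,
      LinearMap.smul_apply]
  | add p₁ p₂ h₁ h₂ => simp only [mul_add, map_add, LinearMap.add_apply, h₁, h₂]
  | monomial n c ih =>
    have hX : f * (X * (C c * X ^ n))
        = X * f * (f * (C c * X ^ n)) - (f * f - f) * (X * C c * X ^ n) := by ring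
    rw [show C c * X ^ (n + 1) = X * (C c * X ^ n) by ring, map_mul, Module.End.mul_apply,
      aeval_X, ih, hJ.mul_aeval_apply, hX,
      map_sub, LinearMap.sub_apply, aeval_mul_apply_eq_zero hf, sub_zero]

theorem exists_add_eq_of_isCoprime (hJ : IsJordanProduct mul) {b : A} {q₁ q₂ : ℝ[X]}
    (hq : aeval (mul b) (q₁ * q₂) b = 0) (hcop : IsCoprime q₁ q₂) :
    ∃ u w : A, u + w = b ∧ mul u w = 0 ∧
      aeval (mul u) q₁ u = 0 ∧ aeval (mul w) q₂ w = 0 := by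
  obtain ⟨s, t, hst⟩ := hcop
  have hker (r : ℝ[X]) : aeval (mul b) (q₁ * q₂ * r) b = 0 := aeval_mul_apply_eq_zero hq r
  refine ⟨aeval (mul b) (t * q₂) b, aeval (mul b) (s * q₁) b, ?_, ?_, ?_, ?_⟩
  · rw [← LinearMap.add_apply, ← map_add, add_comm, hst, map_one, Module.End.one_apply]
  · rw [hJ.mul_aeval_apply, show X * (t * q₂) * (s * q₁) = q₁ * q₂ * (X * s * t) by ring]
    exact hker _
  · rw [hJ.aeval_mul_aeval_apply, show t * q₂ * q₁ = q₁ * q₂ * t by ring]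
    · exact hker t
    · rw [show t * q₂ * (t * q₂) - t * q₂ = q₁ * q₂ * (-s * t) by
        linear_combination (t * q₂) * hst]
      exact hker _
  · rw [hJ.aeval_mul_aeval_apply, show s * q₁ * q₂ = q₁ * q₂ * s by ring]
    · exact hker s
    · rw [show s * q₁ * (s * q₁) - s * q₁ = q₁ * q₂ * (-s * t) by
        linear_combination (s * q₁) * hst]
      exact hker _

theorem trace_pos_of_mul_self_eq_self (hJ : IsJordanProduct mul) [FiniteDimensional ℝ A] {e : A}
    (he : mul e e = e) (he0 : e ≠ 0) : 0 < LinearMap.trace ℝ A (mul e) := by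
  refine LinearMap.trace_pos_of_peirce (LinearMap.ext fun x ↦ ?_) he he0
  have h := hJ.jordan_linearized e e x
  rw [he, he, hJ.comm (mul e x) e, hJ.comm (mul e (mul e x)) e] at h
  simp only [map_mul, map_sub, map_ofNat, aeval_X, Module.End.mul_apply, map_one,
    LinearMap.sub_apply, Module.End.ofNat_apply, Module.End.one_apply, LinearMap.zero_apply,
    map_nsmul]
  linear_combination (norm := module) h

theorem trace_mul_mul_self_pos_of_mul_self_eq_smul (hJ : IsJordanProduct mul)
    [FiniteDimensional ℝ A] {b : A} (hb : b ≠ 0) {c : ℝ} (hc : c ≠ 0)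
    (hbc : mul b b = c • b) :
    0 < LinearMap.trace ℝ A (mul (mul b b)) := by
  have he : mul (c⁻¹ • b) (c⁻¹ • b) = c⁻¹ • b := by
    rw [map_smul, map_smul, LinearMap.smul_apply, hbc, smul_smul, smul_smul, mul_assoc,
      inv_mul_cancel₀ hc, mul_one]
  have hb' : mul (mul b b) = (c * c) • mul (c⁻¹ • b) := by
    rw [hbc, map_smul, map_smul, smul_smul, mul_assoc, mul_inv_cancel₀ hc, mul_one]
  rw [hb', map_smul, smul_eq_mul]
  exact mul_pos (mul_self_pos.mpr hc)
    (hJ.trace_pos_of_mul_self_eq_self he (smul_ne_zero (inv_ne_zero hc) hb))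

theorem aeval_eq_zero_of_dvd (hJ : IsJordanProduct mul)
    (hfr : ∀ x y : A, mul x x + mul y y = 0 → x = 0) {b : A} {q r s : ℝ[X]}
    (hq : aeval (mul b) q b = 0) (hdvd : q ∣ X * r * r + X * s * s) : aeval (mul b) r b = 0 := by
  obtain ⟨t, ht⟩ := hdvd
  refine hfr _ (aeval (mul b) s b) ?_
  rw [hJ.mul_aeval_apply, hJ.mul_aeval_apply, ← LinearMap.add_apply, ← map_add, ht]
  exact aeval_mul_apply_eq_zero hq t

theorem exists_isCoprime_factor_or_lower_annihilator (hJ : IsJordanProduct mul)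
    (hfr : ∀ x y : A, mul x x + mul y y = 0 → x = 0) {b : A} (hb : b ≠ 0) {q : ℝ[X]}
    (hq0 : q ≠ 0) (hq : aeval (mul b) q b = 0) :
    (∃ (c : ℝ) (q₂ : ℝ[X]), q = (X - C c) * q₂ ∧ IsCoprime (X - C c) q₂) ∨
      ∃ r : ℝ[X], r ≠ 0 ∧ r.natDegree < q.natDegree ∧ aeval (mul b) r b = 0 := by
  have hdeg : 0 < q.natDegree := by
    refine Nat.pos_of_ne_zero fun h ↦ hb ?_
    have hc : q.coeff 0 ≠ 0 := fun h0 ↦ hq0 (by rw [eq_C_of_natDegree_eq_zero h, h0, C_0])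
    rw [eq_C_of_natDegree_eq_zero h, aeval_C, Module.algebraMap_end_apply] at hq
    exact (smul_eq_zero.mp hq).resolve_left hc
  obtain ⟨c, hc⟩ | ⟨α, β, hβ, r, rfl⟩ := exists_isRoot_or_sq_add_sq_dvd hdeg
  · obtain ⟨q₂, rfl⟩ := dvd_iff_isRoot.mpr hc
    have hq₂ : q₂ ≠ 0 := right_ne_zero_of_mul hq0
    have hlt : q₂.natDegree < ((X - C c) * q₂).natDegree := by
      rw [natDegree_mul (X_sub_C_ne_zero c) hq₂, natDegree_X_sub_C]; omega
    by_cases hdvd : X - C c ∣ q₂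
    · obtain ⟨q₃, hq₃⟩ := hdvd
      refine .inr ⟨q₂, hq₂, hlt, hJ.aeval_eq_zero_of_dvd hfr (s := 0) hq ⟨X * q₃, ?_⟩⟩
      rw [hq₃]; ring
    · exact .inl ⟨c, q₂, rfl, (irreducible_X_sub_C c).coprime_iff_not_dvd.mpr hdvd⟩
  · have hr : r ≠ 0 := right_ne_zero_of_mul hq0
    have hp : ((X - C α) ^ 2 + C (β ^ 2)).natDegree = 2 := by
      rw [natDegree_add_C, natDegree_pow, natDegree_X_sub_C]
    refine .inr ⟨r, hr, ?_, ?_⟩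
    · rw [natDegree_mul (left_ne_zero_of_mul hq0) hr, hp]; omega
    · have h := hJ.aeval_eq_zero_of_dvd hfr (r := C β * r) (s := (X - C α) * r) hq ⟨X * r, by
        rw [map_pow]; ring⟩
      rwa [map_mul, aeval_C, Module.End.mul_apply, Module.algebraMap_end_apply,
        smul_eq_zero, or_iff_right hβ] at h

theorem trace_mul_mul_self_pos (hJ : IsJordanProduct mul) [FiniteDimensional ℝ A]
    (hfr : ∀ x y : A, mul x x + mul y y = 0 → x = 0) {b : A} (hb : b ≠ 0) {q : ℝ[X]}
    (hq0 : q ≠ 0) (hq : aeval (mul b) q b = 0) : 0 < LinearMap.trace ℝ A (mul (mul b b)) := by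
  induction hn : q.natDegree using Nat.strong_induction_on generalizing b q with
  | _ n IH =>
  obtain ⟨c, q₂, rfl, hcop⟩ | ⟨r, hr0, hrq, hr⟩ :=
    hJ.exists_isCoprime_factor_or_lower_annihilator hfr hb hq0 hq
  · obtain ⟨u, w, rfl, huw, hu, hw⟩ := hJ.exists_add_eq_of_isCoprime hq hcop
    have hsq : mul (u + w) (u + w) = mul u u + mul w w := by
      simp only [map_add, LinearMap.add_apply, hJ.comm w u, huw]; abel
    have hu_pos (hu0 : u ≠ 0) : 0 < LinearMap.trace ℝ A (mul (mul u u)) := by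
      have huc : mul u u = c • u := by
        simpa [sub_eq_zero] using hu
      refine hJ.trace_mul_mul_self_pos_of_mul_self_eq_smul hu0 (fun hc ↦ hu0 ?_) huc
      exact hfr u 0 (by simp [huc, hc])
    have hq₂ : q₂ ≠ 0 := right_ne_zero_of_mul hq0
    have hlt : q₂.natDegree < n := by
      rw [← hn, natDegree_mul (X_sub_C_ne_zero c) hq₂, natDegree_X_sub_C]; omega
    rw [hsq, map_add, map_add]
    rcases eq_or_ne w 0 with rfl | hw0
    · simpa using hu_pos (by simpa using hb)
    · have hw_pos := IH _ hlt hw0 hq₂ hw rfl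
      rcases eq_or_ne u 0 with rfl | hu0
      · simpa using hw_pos
      · linarith [hu_pos hu0]
  · exact IH _ (hn ▸ hrq) hb hr0 hr rfl

end IsJordanProduct

end

/-- In a finite-dimensional formally real Jordan algebra `A`, the bilinear form
`⟨a, b⟩ = tr (L_{a ∘ b})`, where `L_c` is Jordan multiplication by `c`, is a
positive definite (symmetric) inner product. -/
theorem stmt_10 (A : Type*) [AddCommGroup A] [Module ℝ A] [FiniteDimensional ℝ A]
    (mul : A →ₗ[ℝ] A →ₗ[ℝ] A)
    (h_comm : ∀ a b : A, mul a b = mul b a)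
    (h_jordan : ∀ a b : A,
      mul (mul (mul a a) b) a = mul (mul a a) (mul b a))
    (h_formally_real : ∀ (k : ℕ) (s : Fin k → A),
      ∑ i, mul (s i) (s i) = 0 → ∀ i, s i = 0) :
    (∀ a b : A, LinearMap.trace ℝ A (mul (mul a b)) = LinearMap.trace ℝ A (mul (mul b a))) ∧
    (∀ a : A, a ≠ 0 → 0 < LinearMap.trace ℝ A (mul (mul a a))) := by
  have hJ : IsJordanProduct mul := ⟨h_comm, h_jordan⟩
  have hfr (x y : A) (h : mul x x + mul y y = 0) : x = 0 :=
    h_formally_real 2 ![x, y] (by simpa [Fin.sum_univ_two] using h) 0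
  refine ⟨fun a b ↦ by rw [h_comm], fun a ha ↦ ?_⟩
  exact hJ.trace_mul_mul_self_pos hfr ha (LinearMap.charpoly_monic (mul a)).ne_zero
    (by rw [LinearMap.aeval_self_charpoly, LinearMap.zero_apply])
end

section
/- Let H be a finite-dimensional irreducible complex unitary representation of a group G admitting a nonzero invariant antisymmetric bilinear form g. Then there exists an antiunitary map J : H → H commuting with the G-action and satisfying J² = −1. -/
/-!
Represent `g` by the conjugate-linear map `A` with `⟪A v, w⟫ = g v w`. Invariance of `g` and
unitarity make `A` commute with `G`, so `A²` is a linear intertwiner and Schur's lemma gives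
`A² = c`. Antisymmetry of `g` turns this into `⟪A v, A w⟫ = -c̄ ⟪w, v⟫`; at `v = w` this forces
`c = -r²` for a real `r > 0`, and `J = r⁻¹ A` is the required antiunitary.
-/

open ComplexConjugate

section Schur

variable {G : Type*} [Group G] {K : Type*} [Field K] [IsAlgClosed K]
  {V : Type*} [AddCommGroup V] [Module K V] [FiniteDimensional K V] [Nontrivial V]

theorem exists_eq_smul_of_commute_of_irreducible (ρ : G →* (V ≃ₗ[K] V))
    (h_irred : ∀ W : Submodule K V, (∀ g : G, W.map (ρ g : V →ₗ[K] V) ≤ W) → W = ⊥ ∨ W = ⊤)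
    (T : Module.End K V) (hT : ∀ (g : G) (v : V), T (ρ g v) = ρ g (T v)) :
    ∃ c : K, ∀ v, T v = c • v := by
  obtain ⟨c, hc⟩ := Module.End.exists_eigenvalue T
  have h_inv : ∀ g : G, (T.eigenspace c).map (ρ g : V →ₗ[K] V) ≤ T.eigenspace c := by
    rintro g _ ⟨v, hv, rfl⟩
    rw [SetLike.mem_coe, Module.End.mem_eigenspace_iff] at hv
    simp [hT, hv]
  have h_top : T.eigenspace c = ⊤ := (h_irred _ h_inv).resolve_left hc
  exact ⟨c, fun v => Module.End.mem_eigenspace_iff.mp (h_top ▸ Submodule.mem_top)⟩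

end Schur

section Riesz

variable {H : Type*} [NormedAddCommGroup H] [InnerProductSpace ℂ H]

noncomputable def LinearMap.bilinRiesz [FiniteDimensional ℂ H] (g : H →ₗ[ℂ] H →ₗ[ℂ] ℂ) :
    H →ₗ⋆[ℂ] H :=
  (InnerProductSpace.toDual ℂ H).symm.toLinearEquiv.toLinearMap ∘ₛₗ
    (LinearMap.toContinuousLinearMap.toLinearMap ∘ₗ g)

theorem LinearMap.inner_bilinRiesz_apply [FiniteDimensional ℂ H] (g : H →ₗ[ℂ] H →ₗ[ℂ] ℂ)
    (v w : H) : inner ℂ (g.bilinRiesz v) w = g v w := by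
  simp [LinearMap.bilinRiesz]

theorem LinearMap.bilinRiesz_map_apply_of_invariant [FiniteDimensional ℂ H]
    {g : H →ₗ[ℂ] H →ₗ[ℂ] ℂ} {U : H ≃ₗ[ℂ] H} (hU : ∀ v w, inner ℂ (U v) (U w) = (inner ℂ v w : ℂ))
    (hgU : ∀ v w, g (U v) (U w) = g v w) (v : H) :
    g.bilinRiesz (U v) = U (g.bilinRiesz v) := by
  refine ext_inner_right ℂ fun w => ?_
  obtain ⟨w, rfl⟩ := U.surjective w
  rw [inner_bilinRiesz_apply, hgU, hU, inner_bilinRiesz_apply]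

theorem LinearMap.inner_bilinRiesz_bilinRiesz_of_antisymm [FiniteDimensional ℂ H]
    {g : H →ₗ[ℂ] H →ₗ[ℂ] ℂ} (hg_anti : ∀ v w, g v w = -g w v) {c : ℂ}
    (hc : ∀ v, g.bilinRiesz (g.bilinRiesz v) = c • v) (v w : H) :
    inner ℂ (g.bilinRiesz v) (g.bilinRiesz w) = -conj c * inner ℂ w v := by
  have h := inner_bilinRiesz_apply g (g.bilinRiesz w) v
  rw [hc, inner_smul_left, hg_anti, ← inner_bilinRiesz_apply] at h
  linear_combination h

theorem LinearMap.bilinRiesz_ne_zero [FiniteDimensional ℂ H] {g : H →ₗ[ℂ] H →ₗ[ℂ] ℂ}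
    (hg : g ≠ 0) : g.bilinRiesz ≠ 0 := by
  refine fun h => hg (LinearMap.ext₂ fun v w => ?_)
  rw [← inner_bilinRiesz_apply, h, LinearMap.zero_apply, inner_zero_left]
  rfl

theorem exists_real_smul_antiunitary {A : H →ₗ⋆[ℂ] H} {c : ℂ} (hsq : ∀ v, A (A v) = c • v)
    (hinner : ∀ v w, inner ℂ (A v) (A w) = -conj c * inner ℂ w v) (hA : A ≠ 0) :
    ∃ t : ℝ, (∀ v w, inner ℂ ((t : ℂ) • A v) ((t : ℂ) • A w) = (inner ℂ w v : ℂ)) ∧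
      ∀ v, (t : ℂ) • A ((t : ℂ) • A v) = -v := by
  obtain ⟨v₀, hv₀⟩ : ∃ v, A v ≠ 0 := by
    by_contra! h
    exact hA (LinearMap.ext h)
  have hv₀' : v₀ ≠ 0 := fun h => hv₀ (h ▸ map_zero A)
  set r : ℝ := ‖A v₀‖ / ‖v₀‖
  have hr : r ≠ 0 := div_ne_zero (norm_ne_zero_iff.mpr hv₀) (norm_ne_zero_iff.mpr hv₀')
  have hrC : (r : ℂ) ≠ 0 := by exact_mod_cast hr
  have hc : c = -(r : ℂ) ^ 2 := by
    have h := hinner v₀ v₀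
    rw [inner_self_eq_norm_sq_to_K, inner_self_eq_norm_sq_to_K] at h
    have hn : (‖v₀‖ : ℂ) ≠ 0 := by exact_mod_cast norm_ne_zero_iff.mpr hv₀'
    have : conj c = -(r : ℂ) ^ 2 := by
      simp only [r]
      push_cast
      field_simp
      linear_combination h
    simpa using congrArg conj this
  refine ⟨r⁻¹, fun v w => ?_, fun v => ?_⟩
  · rw [inner_smul_left, inner_smul_right, hinner, hc]
    simp only [Complex.conj_ofReal, map_neg, map_pow]
    push_cast
    field_simp
  · rw [map_smulₛₗ, hsq, hc, smul_smul, smul_smul, Complex.conj_ofReal, ← neg_one_smul ℂ v]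
    congr 1
    push_cast
    field_simp

end Riesz

/-- If a finite-dimensional irreducible complex unitary representation `H` of a group
`G` admits a nonzero invariant antisymmetric bilinear form, then there is an antiunitary
map `J : H → H` (a conjugate-linear bijection reversing the inner product) commuting
with the `G`-action and satisfying `J² = -1`. -/
theorem stmt_14 {G : Type*} [Group G] {H : Type*} [NormedAddCommGroup H]
    [InnerProductSpace ℂ H] [FiniteDimensional ℂ H]
    (ρ : G →* (H ≃ₗ[ℂ] H))
    (h_unitary : ∀ (g : G) (v w : H), inner ℂ (ρ g v) (ρ g w) = (inner ℂ v w : ℂ))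
    (h_irred : ∀ W : Submodule ℂ H,
      (∀ g : G, W.map (ρ g : H →ₗ[ℂ] H) ≤ W) → W = ⊥ ∨ W = ⊤)
    (g : H →ₗ[ℂ] H →ₗ[ℂ] ℂ) (hg_ne : g ≠ 0)
    (hg_inv : ∀ (h : G) (v w : H), g (ρ h v) (ρ h w) = g v w)
    (hg_anti : ∀ v w : H, g v w = -g w v) :
    ∃ J : H →ₗ⋆[ℂ] H,
      (∀ v w : H, inner ℂ (J v) (J w) = (inner ℂ w v : ℂ)) ∧
      (∀ (h : G) (v : H), J (ρ h v) = ρ h (J v)) ∧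
      (∀ v : H, J (J v) = -v) := by
  set A := g.bilinRiesz
  have hA : A ≠ 0 := LinearMap.bilinRiesz_ne_zero hg_ne
  have hA_comm (h : G) (v : H) : A (ρ h v) = ρ h (A v) :=
    LinearMap.bilinRiesz_map_apply_of_invariant (h_unitary h) (hg_inv h) v
  have : Nontrivial H := by
    by_contra! h
    exact hA (Subsingleton.elim _ _)
  obtain ⟨c, hc⟩ := exists_eq_smul_of_commute_of_irreducible ρ h_irred (A.comp A : H →ₗ[ℂ] H)
    fun h v => by simp [hA_comm]
  obtain ⟨t, h_inner, h_sq⟩ := exists_real_smul_antiunitary hc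
    (LinearMap.inner_bilinRiesz_bilinRiesz_of_antisymm hg_anti hc) hA
  refine ⟨(t : ℂ) • A, h_inner, fun h v => ?_, h_sq⟩
  rw [LinearMap.smul_apply, LinearMap.smul_apply, hA_comm, map_smul]
end
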